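/- arXiv:1308.5071 — 2 statements merged into one kernel-verified Lean document; each statement's English description precedes it below -/
import Mathlib

section
/- The function V(r) = r·coth(r) − log(sinh(r)) − log 2 is strictly convex on (0, ∞). -/
noncomputable def V (r : ℝ) : ℝ :=
  r * Real.cosh r / Real.sinh r - Real.log (Real.sinh r) - Real.log 2

/-!
The derivative of `V` is `V' x = -x / sinh² x`, and `V'' x = (2 x cosh x - sinh x) / sinh³ x`
is positive on `(0, ∞)` because `tanh x < x` there.
-/

open Real Set

lemma Real.sinh_lt_self_mul_cosh {x : ℝ} (hx : 0 < x) : sinh x < x * cosh x := by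
  have hmono : StrictMonoOn (fun y ↦ y * cosh y - sinh y) (Ici 0) := by
    refine strictMonoOn_of_deriv_pos (convex_Ici 0) (by fun_prop) fun y hy ↦ ?_
    rw [interior_Ici] at hy
    have hderiv : HasDerivAt (fun y ↦ y * cosh y - sinh y) (y * sinh y) y :=
      (((hasDerivAt_id' y).mul (hasDerivAt_cosh y)).sub (hasDerivAt_sinh y)).congr_deriv
        (by ring)
    rw [hderiv.deriv]
    exact mul_pos hy (sinh_pos_iff.2 hy)
  simpa using hmono self_mem_Ici hx.le hx

lemma hasDerivAt_V {x : ℝ} (hx : x ≠ 0) : HasDerivAt V (-x / sinh x ^ 2) x := by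
  have hs : sinh x ≠ 0 := sinh_ne_zero.2 hx
  have hnum : HasDerivAt (fun r ↦ r * cosh r) (cosh x + x * sinh x) x :=
    ((hasDerivAt_id' x).mul (hasDerivAt_cosh x)).congr_deriv (by ring)
  refine (((hnum.div (hasDerivAt_sinh x) hs).sub ((hasDerivAt_sinh x).log hs)).sub_const
    (log 2)).congr_deriv ?_
  field_simp
  linear_combination (-x) * cosh_sq x

lemma hasDerivAt_neg_div_sinh_sq {x : ℝ} (hx : x ≠ 0) :
    HasDerivAt (fun r ↦ -r / sinh r ^ 2) ((2 * x * cosh x - sinh x) / sinh x ^ 3) x := by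
  have hs : sinh x ≠ 0 := sinh_ne_zero.2 hx
  have hsq : HasDerivAt (fun r ↦ sinh r ^ 2) (2 * sinh x * cosh x) x :=
    ((hasDerivAt_sinh x).pow 2).congr_deriv (by ring)
  refine ((hasDerivAt_neg x).div hsq (pow_ne_zero 2 hs)).congr_deriv ?_
  field_simp
  ring

lemma strictMonoOn_neg_div_sinh_sq : StrictMonoOn (fun r ↦ -r / sinh r ^ 2) (Ioi 0) := by
  refine strictMonoOn_of_deriv_pos (convex_Ioi 0)
    (fun x hx ↦ (hasDerivAt_neg_div_sinh_sq (ne_of_gt hx)).continuousAt.continuousWithinAt)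
    fun x hx ↦ ?_
  rw [interior_Ioi] at hx
  rw [(hasDerivAt_neg_div_sinh_sq (ne_of_gt hx)).deriv]
  have hlt := sinh_lt_self_mul_cosh hx
  have hxc : 0 < x * cosh x := mul_pos hx (cosh_pos x)
  exact div_pos (by linarith) (pow_pos (sinh_pos_iff.2 hx) 3)

theorem V_strictConvexOn : StrictConvexOn ℝ (Set.Ioi (0 : ℝ)) V := by
  have hcont : ContinuousOn V (Ioi 0) := fun x hx ↦
    (hasDerivAt_V (ne_of_gt hx)).continuousAt.continuousWithinAt
  have hderiv : EqOn (fun r ↦ -r / sinh r ^ 2) (deriv V) (Ioi 0) := fun x hx ↦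
    ((hasDerivAt_V (ne_of_gt hx)).deriv).symm
  refine StrictMonoOn.strictConvexOn_of_deriv (convex_Ioi 0) hcont ?_
  rw [interior_Ioi]
  exact strictMonoOn_neg_div_sinh_sq.congr hderiv
end

section
/- Diagonal argument for limsup inequalities: let M be a metric space, M₁ ⊆ M, and F_n, F : M → ℝ ∪ {±∞}. Suppose (i) for every v ∈ M₁ there exists a sequence (u_n) in M with u_n → v and limsup F_n(u_n) ≤ F(v), and (ii) for every u ∈ M there exists a sequence (v_n) in M₁ with v_n → u and limsup F(v_n) ≤ F(u). Then for every u ∈ M there exists a sequence (u_n) in M with u_n → u and limsup F_n(u_n) ≤ F(u). -/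
/-!
Pick `v_k ∈ M₁` with `v_k → u` and `limsup F(v_k) ≤ F(u)`, and for each `k` a recovery
sequence `n ↦ u_{k,n}` for `v_k`. The sequence `w_n := u_{K(n),n}` works for any `K(n) → ∞`
growing slowly enough that, for `n` large, `u_{K(n),n}` is `1/(K(n)+1)`-close to `v_{K(n)}`
and `F_n(u_{K(n),n})` stays below every threshold `q_j`, `j ≤ K(n)`, lying above
`F(v_{K(n)})`; here `(q_j)` is a dense sequence in `[-∞, +∞]`. Each of these is an eventual
property in `n` for fixed `k`, and such eventual properties can always be diagonalised along
a slowly growing `K`.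
-/

open Filter Topology

theorem exists_tendsto_atTop_and_eventually_diag {p : ℕ → ℕ → Prop}
    (h : ∀ k, ∀ᶠ n in atTop, p k n) :
    ∃ K : ℕ → ℕ, Tendsto K atTop atTop ∧ ∀ᶠ n in atTop, p (K n) n := by
  obtain ⟨φ, hφ, hφp⟩ :=
    extraction_forall_of_eventually fun k => eventually_forall_ge_atTop.2 (h k)
  refine ⟨fun n => Nat.findGreatest (fun k => φ k ≤ n) n, ?_, ?_⟩
  · refine tendsto_atTop.2 fun k => ?_
    filter_upwards [eventually_ge_atTop (φ k)] with n hn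
    exact Nat.le_findGreatest (hφ.le_apply.trans hn) hn
  · filter_upwards [eventually_ge_atTop (φ 0)] with n hn
    exact hφp _ n (Nat.findGreatest_spec (P := fun k => φ k ≤ n) (Nat.zero_le n) hn)

theorem tendsto_diag_of_dist_lt_one_div {X : Type*} [PseudoMetricSpace X] {v : ℕ → X} {u : X}
    (hv : Tendsto v atTop (𝓝 u)) {K : ℕ → ℕ} (hK : Tendsto K atTop atTop) {x : ℕ → X}
    (hx : ∀ᶠ n in atTop, dist (x n) (v (K n)) < 1 / (K n + 1)) :
    Tendsto x atTop (𝓝 u) := by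
  refine (hv.comp hK).congr_dist (squeeze_zero' (Eventually.of_forall fun _ => dist_nonneg)
    ?_ (tendsto_one_div_add_atTop_nhds_zero_nat.comp hK))
  filter_upwards [hx] with n hn
  exact (dist_comm (x n) _ ▸ hn).le

section Thresholds

variable {β : Type*} [CompleteLinearOrder β]

/-- Stands in for `x ≤ a + 1/(k+1)`, which carries no information when `a = ±∞`. -/
def BelowThresholds (q : ℕ → β) (k : ℕ) (a x : β) : Prop :=
  ∀ j ≤ k, a < q j → x < q j

theorem eventually_belowThresholds_of_limsup_le (q : ℕ → β) (k : ℕ) {a : β} {f : ℕ → β}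
    (hf : limsup f atTop ≤ a) : ∀ᶠ n in atTop, BelowThresholds q k a (f n) := by
  refine (eventually_all_finite (Set.finite_Iic k)).2 fun j _ => ?_
  by_cases hj : a < q j
  · filter_upwards [eventually_lt_of_limsup_lt (hf.trans_lt hj)] with n hn _ using hn
  · exact Eventually.of_forall fun _ hj' => absurd hj' hj

theorem limsup_le_of_eventually_belowThresholds [TopologicalSpace β] [OrderTopology β]
    [DenselyOrdered β] {q : ℕ → β} (hq : DenseRange q) {a : ℕ → β} {K : ℕ → ℕ}
    (hK : Tendsto K atTop atTop) {x : ℕ → β}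
    (hx : ∀ᶠ n in atTop, BelowThresholds q (K n) (a (K n)) (x n)) :
    limsup x atTop ≤ limsup a atTop := by
  refine le_of_forall_gt_imp_ge_of_dense fun c hc => ?_
  obtain ⟨_, ⟨j, rfl⟩, hqj, hqc⟩ := hq.exists_between hc
  have ha : ∀ᶠ n in atTop, a (K n) < q j := hK.eventually (eventually_lt_of_limsup_lt hqj)
  refine limsup_le_of_le (by isBoundedDefault) ?_
  filter_upwards [hx, ha, hK.eventually_ge_atTop j] with n hxn han hjn
  exact (hxn j hjn han).le.trans hqc.le

end Thresholds

theorem diagonal_argument {M : Type*} [MetricSpace M] (M₁ : Set M)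
    (F : ℕ → M → EReal) (Flim : M → EReal)
    (h1 : ∀ v ∈ M₁, ∃ u : ℕ → M, Tendsto u atTop (nhds v) ∧
      limsup (fun n => F n (u n)) atTop ≤ Flim v)
    (h2 : ∀ u : M, ∃ v : ℕ → M, (∀ n, v n ∈ M₁) ∧ Tendsto v atTop (nhds u) ∧
      limsup (fun n => Flim (v n)) atTop ≤ Flim u) :
    ∀ u : M, ∃ w : ℕ → M, Tendsto w atTop (nhds u) ∧
      limsup (fun n => F n (w n)) atTop ≤ Flim u := by
  intro u
  obtain ⟨v, hvM₁, hv, hvF⟩ := h2 u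
  choose w hw hwF using fun k => h1 (v k) (hvM₁ k)
  obtain ⟨q, hq⟩ := TopologicalSpace.exists_dense_seq EReal
  have hclose : ∀ k, ∀ᶠ n in atTop, dist (w k n) (v k) < 1 / (k + 1) := fun k =>
    Metric.tendsto_nhds.1 (hw k) _ Nat.one_div_pos_of_nat
  obtain ⟨K, hK, hKw⟩ := exists_tendsto_atTop_and_eventually_diag fun k =>
    (hclose k).and (eventually_belowThresholds_of_limsup_le q k (hwF k))
  exact ⟨fun n => w (K n) n, tendsto_diag_of_dist_lt_one_div hv hK (hKw.mono fun _ h => h.1),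
    (limsup_le_of_eventually_belowThresholds hq hK (hKw.mono fun _ h => h.2)).trans hvF⟩
end
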